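/- The map G : (0,∞)² → ℝ², G(u,v) = (g₁(u,v), g₂(u,v)), where g₁(u,v) = u + (u/v) · φ(v)/(1 − Φ(−v)) and g₂(u,v) = u²/v² + u² + (u²/v) · φ(v)/(1 − Φ(−v)), is injective on (0,∞)². Consequently, for any pair (M₁, M₂) in the range of G, the system g₁(u,v) = M₁, g₂(u,v) = M₂ has exactly one solution (u,v) with u > 0 and v > 0. -/

import Mathlib

/-!
With `m(v) = φ(v)/Φ(v)` one has `g₁ = (u/v)(v + m)` and `g₂ = (u/v)²(1 + v(v + m))`, so
`g₂/g₁² − 1 = (1 − m(v + m))/(v + m)²` depends on `v` alone. Since `m' = −m(v + m)`, its derivative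
has the sign of `m(v + m)(v(v + m) + 3) − 2`. This is negative: `Φ(v) ≥ 1/2 + vφ(v)` and a Taylor
bound for `exp(v²/2)` give `m(v) ≤ 1/E(v)` with `E` a polynomial, and the resulting polynomial
inequality has a sum-of-squares certificate. Hence the moments determine `v`, and then `g₁`
determines `u`.
-/

open MeasureTheory Real

/-- The standard normal probability density function φ. -/
noncomputable def stdPhi (x : ℝ) : ℝ := Real.exp (-x ^ 2 / 2) / Real.sqrt (2 * Real.pi)

/-- The standard normal cumulative distribution function Φ. -/
noncomputable def stdCDF (x : ℝ) : ℝ := ∫ u in Set.Iic x, stdPhi u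

/-- The stationary first moment g₁(u,v) = u + (u/v)·φ(v)/(1 − Φ(−v)). -/
noncomputable def g1 (u v : ℝ) : ℝ := u + (u / v) * stdPhi v / (1 - stdCDF (-v))

/-- The stationary second moment
g₂(u,v) = u²/v² + u² + (u²/v)·φ(v)/(1 − Φ(−v)). -/
noncomputable def g2 (u v : ℝ) : ℝ :=
  u ^ 2 / v ^ 2 + u ^ 2 + (u ^ 2 / v) * stdPhi v / (1 - stdCDF (-v))

/-- The moment map G(u,v) = (g₁(u,v), g₂(u,v)). -/
noncomputable def momentMap (p : ℝ × ℝ) : ℝ × ℝ := (g1 p.1 p.2, g2 p.1 p.2)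

open Set ProbabilityTheory

lemma stdPhi_eq_gaussianPDFReal : stdPhi = gaussianPDFReal 0 1 := by
  ext x
  simp [stdPhi, gaussianPDFReal, div_eq_inv_mul]

lemma stdPhi_pos (x : ℝ) : 0 < stdPhi x := by
  unfold stdPhi
  positivity

lemma stdPhi_neg (x : ℝ) : stdPhi (-x) = stdPhi x := by
  simp [stdPhi]

lemma continuous_stdPhi : Continuous stdPhi := by
  unfold stdPhi
  fun_prop

lemma integrable_stdPhi : Integrable stdPhi :=
  stdPhi_eq_gaussianPDFReal ▸ integrable_gaussianPDFReal 0 1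

lemma integral_stdPhi : ∫ x, stdPhi x = 1 :=
  stdPhi_eq_gaussianPDFReal ▸ integral_gaussianPDFReal_eq_one 0 one_ne_zero

lemma hasDerivAt_stdPhi (x : ℝ) : HasDerivAt stdPhi (-x * stdPhi x) x := by
  have h : HasDerivAt (fun y : ℝ => -y ^ 2 / 2) (-x) x :=
    ((hasDerivAt_pow 2 x).neg.div_const 2).congr_deriv (by ring)
  exact (h.exp.div_const (Real.sqrt (2 * π))).congr_deriv (by rw [stdPhi]; ring)

lemma stdCDF_sub_stdCDF (a b : ℝ) : stdCDF b - stdCDF a = ∫ t in a..b, stdPhi t := by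
  rw [stdCDF, stdCDF, intervalIntegral.integral_Iic_sub_Iic integrable_stdPhi.integrableOn
    integrable_stdPhi.integrableOn]

lemma hasDerivAt_stdCDF (x : ℝ) : HasDerivAt stdCDF (stdPhi x) x := by
  have h : HasDerivAt (fun y => stdCDF 0 + ∫ t in (0 : ℝ)..y, stdPhi t) (stdPhi x) x :=
    (intervalIntegral.integral_hasDerivAt_right integrable_stdPhi.intervalIntegrable
      (continuous_stdPhi.stronglyMeasurableAtFilter _ _) continuous_stdPhi.continuousAt).const_add _
  refine h.congr_of_eventuallyEq (Filter.Eventually.of_forall fun y => ?_)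
  simp only [← stdCDF_sub_stdCDF, add_sub_cancel]

lemma one_sub_stdCDF_neg (x : ℝ) : 1 - stdCDF (-x) = stdCDF x := by
  have h_total : stdCDF x + ∫ t in Ioi x, stdPhi t = 1 := by
    rw [stdCDF, intervalIntegral.integral_Iic_add_Ioi integrable_stdPhi.integrableOn
      integrable_stdPhi.integrableOn, integral_stdPhi]
  have h_tail : ∫ t in Ioi x, stdPhi t = stdCDF (-x) := by
    rw [stdCDF, ← integral_comp_neg_Ioi]
    simp_rw [stdPhi_neg]
  linarith

lemma stdCDF_pos (x : ℝ) : 0 < stdCDF x := by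
  rw [stdCDF, setIntegral_pos_iff_support_of_nonneg_ae
    (Filter.Eventually.of_forall fun y => (stdPhi_pos y).le) integrable_stdPhi.integrableOn,
    Function.support_eq_univ fun y => (stdPhi_pos y).ne', univ_inter]
  simp

lemma stdCDF_zero : stdCDF 0 = 1 / 2 := by
  have := one_sub_stdCDF_neg 0
  rw [neg_zero] at this
  linarith

lemma half_add_mul_stdPhi_le_stdCDF {x : ℝ} (hx : 0 ≤ x) : 1 / 2 + x * stdPhi x ≤ stdCDF x := by
  have h_anti : ∀ t ∈ Icc 0 x, stdPhi x ≤ stdPhi t := fun t ⟨ht0, htx⟩ => by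
    unfold stdPhi
    gcongr
  have h := intervalIntegral.integral_mono_on hx intervalIntegrable_const
    integrable_stdPhi.intervalIntegrable h_anti
  rw [intervalIntegral.integral_const, smul_eq_mul, sub_zero, ← stdCDF_sub_stdCDF,
    stdCDF_zero] at h
  linarith

/-- `φ(v)/Φ(v) = φ(−v)/(1 − Φ(−v))`, the ratio occurring in `g1` and `g2`. -/
noncomputable def millsRatio (v : ℝ) : ℝ := stdPhi v / stdCDF v

lemma millsRatio_pos (v : ℝ) : 0 < millsRatio v :=
  div_pos (stdPhi_pos v) (stdCDF_pos v)

lemma hasDerivAt_millsRatio (v : ℝ) :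
    HasDerivAt millsRatio (-millsRatio v * (v + millsRatio v)) v := by
  refine ((hasDerivAt_stdPhi v).div (hasDerivAt_stdCDF v) (stdCDF_pos v).ne').congr_deriv ?_
  simp only [millsRatio]
  field_simp [(stdCDF_pos v).ne']
  ring

lemma g1_eq {v : ℝ} (hv : v ≠ 0) (u : ℝ) : g1 u v = u / v * (v + millsRatio v) := by
  rw [g1, one_sub_stdCDF_neg, millsRatio]
  field_simp [(stdCDF_pos v).ne']

lemma g2_eq {v : ℝ} (hv : v ≠ 0) (u : ℝ) :
    g2 u v = (u / v) ^ 2 * (1 + v * (v + millsRatio v)) := by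
  rw [g2, one_sub_stdCDF_neg, millsRatio]
  field_simp [(stdCDF_pos v).ne']
  ring

/-- A polynomial lower bound for `1 / millsRatio v` on `v ≥ 0`: `12533/10000 < √(2π)/2` and
`1 + t + t²/2 ≤ exp t` at `t = v²/2`. -/
noncomputable def millsRatioInvLB (v : ℝ) : ℝ := 12533 / 10000 * (1 + v ^ 2 / 2 + v ^ 4 / 8) + v

lemma millsRatioInvLB_pos {v : ℝ} (hv : 0 ≤ v) : 0 < millsRatioInvLB v := by
  unfold millsRatioInvLB
  positivity

lemma millsRatioInvLB_le_inv_stdPhi (v : ℝ) :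
    millsRatioInvLB v ≤ (2 * stdPhi v)⁻¹ + v := by
  have h_exp : 1 + v ^ 2 / 2 + v ^ 4 / 8 ≤ Real.exp (v ^ 2 / 2) := by
    have := Real.quadratic_le_exp_of_nonneg (x := v ^ 2 / 2) (by positivity)
    linarith
  have h_sqrt : 12533 / 10000 ≤ Real.sqrt (2 * π) / 2 := by
    have : (25066 / 10000 : ℝ) ^ 2 ≤ 2 * π := by linarith [Real.pi_gt_d6]
    linarith [Real.le_sqrt_of_sq_le this]
  have h_inv : (2 * stdPhi v)⁻¹ = Real.sqrt (2 * π) / 2 * Real.exp (v ^ 2 / 2) := by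
    rw [stdPhi, neg_div, Real.exp_neg]
    field_simp
  rw [h_inv, millsRatioInvLB]
  gcongr

lemma millsRatio_le {v : ℝ} (hv : 0 ≤ v) : millsRatio v ≤ (millsRatioInvLB v)⁻¹ := by
  have hφ := stdPhi_pos v
  calc millsRatio v ≤ stdPhi v / (1 / 2 + v * stdPhi v) :=
        div_le_div_of_nonneg_left hφ.le (by positivity) (half_add_mul_stdPhi_le_stdCDF hv)
    _ = ((2 * stdPhi v)⁻¹ + v)⁻¹ := by field_simp
    _ ≤ (millsRatioInvLB v)⁻¹ :=
        inv_anti₀ (millsRatioInvLB_pos hv) (millsRatioInvLB_le_inv_stdPhi v)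

lemma millsRatioInvLB_poly_lt {v : ℝ} (hv : 0 < v) :
    (v * millsRatioInvLB v + 1) * (v ^ 2 * millsRatioInvLB v + v + 3 * millsRatioInvLB v) <
      2 * millsRatioInvLB v ^ 3 := by
  have h_sos : 2 * millsRatioInvLB v ^ 3 -
      (v * millsRatioInvLB v + 1) * (v ^ 2 * millsRatioInvLB v + v + 3 * millsRatioInvLB v)
      = 42923911 / 680000000 * (v ^ 4 * (v - 17 / 10) ^ 2)
      + 157076089 / 4800000000 * (v ^ 6 * (v - 3) ^ 2)
      + 157076089 / 7680000000 * (v ^ 8 * (v - 3) ^ 2)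
      + 157076089 / 25600000000 * (v ^ 10 * (v - 2) ^ 2)
      + (88684623437 / 500000000000 + 71228267 / 100000000 * v
        + 1519353870311 / 1000000000000 * v ^ 2 + 7076089 / 50000000 * v ^ 3
        + 68455123933 / 4000000000000 * v ^ 4 + 377132743277 / 8500000000000 * v ^ 6
        + 2261353040299 / 96000000000000 * v ^ 8
        + 9078526715933 / 192000000000000 * v ^ 10
        + 397873733437 / 256000000000000 * v ^ 12) := by
    rw [millsRatioInvLB]
    ring
  have h_pos : 0 < 2 * millsRatioInvLB v ^ 3 -
      (v * millsRatioInvLB v + 1) * (v ^ 2 * millsRatioInvLB v + v + 3 * millsRatioInvLB v) := by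
    rw [h_sos]
    positivity
  linarith

lemma millsRatio_cubic_lt_two {v : ℝ} (hv : 0 < v) :
    millsRatio v * (v + millsRatio v) * (v * (v + millsRatio v) + 3) < 2 := by
  have hm := millsRatio_pos v
  have hE := millsRatioInvLB_pos hv.le
  calc millsRatio v * (v + millsRatio v) * (v * (v + millsRatio v) + 3)
      ≤ (millsRatioInvLB v)⁻¹ * (v + (millsRatioInvLB v)⁻¹) *
          (v * (v + (millsRatioInvLB v)⁻¹) + 3) := by
        have := millsRatio_le hv.le
        gcongr
    _ = (v * millsRatioInvLB v + 1) * (v ^ 2 * millsRatioInvLB v + v + 3 * millsRatioInvLB v) /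
          millsRatioInvLB v ^ 3 := by
        field_simp
    _ < 2 := by
        rw [div_lt_iff₀ (by positivity)]
        exact millsRatioInvLB_poly_lt hv

/-- The squared coefficient of variation `g2 / g1² − 1` of the stationary law, which depends on
`v` only. -/
noncomputable def sqCV (v : ℝ) : ℝ :=
  (1 - millsRatio v * (v + millsRatio v)) / (v + millsRatio v) ^ 2

lemma sqCV_eq {u v : ℝ} (hu : u ≠ 0) (hv : 0 < v) : sqCV v = g2 u v / g1 u v ^ 2 - 1 := by
  have hs : v + millsRatio v ≠ 0 := (add_pos hv (millsRatio_pos v)).ne'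
  rw [g1_eq hv.ne', g2_eq hv.ne', sqCV]
  field_simp
  ring

lemma hasDerivAt_sqCV {v : ℝ} (hv : 0 < v) :
    HasDerivAt sqCV
      ((millsRatio v * (v + millsRatio v) * (v * (v + millsRatio v) + 3) - 2) /
        (v + millsRatio v) ^ 3) v := by
  have hs : v + millsRatio v ≠ 0 := (add_pos hv (millsRatio_pos v)).ne'
  have h_sum : HasDerivAt (fun w => w + millsRatio w) (1 + -millsRatio v * (v + millsRatio v)) v :=
    (hasDerivAt_id v).add (hasDerivAt_millsRatio v)
  refine (((hasDerivAt_millsRatio v).mul h_sum).const_sub 1).div (h_sum.pow 2)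
    (pow_ne_zero 2 hs) |>.congr_deriv ?_
  simp only [Pi.mul_apply, Pi.pow_apply]
  field_simp
  ring

lemma strictAntiOn_sqCV : StrictAntiOn sqCV (Ioi 0) := by
  refine strictAntiOn_of_deriv_neg (convex_Ioi 0)
    (fun v hv => (hasDerivAt_sqCV hv).continuousAt.continuousWithinAt) fun v hv => ?_
  rw [interior_Ioi] at hv
  rw [(hasDerivAt_sqCV hv).deriv]
  exact div_neg_of_neg_of_pos (by linarith [millsRatio_cubic_lt_two hv])
    (pow_pos (add_pos hv (millsRatio_pos v)) 3)

/-- The map G = (g₁, g₂) is injective on (0,∞)²; consequently, for any (M₁, M₂) in the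
range of G on (0,∞)², the system g₁(u,v) = M₁, g₂(u,v) = M₂ has exactly one solution
with u > 0 and v > 0. -/
theorem momentMap_injective :
    Set.InjOn momentMap (Set.Ioi (0 : ℝ) ×ˢ Set.Ioi (0 : ℝ)) ∧
      ∀ M ∈ momentMap '' (Set.Ioi (0 : ℝ) ×ˢ Set.Ioi (0 : ℝ)),
        ∃! p : ℝ × ℝ, p ∈ Set.Ioi (0 : ℝ) ×ˢ Set.Ioi (0 : ℝ) ∧ momentMap p = M := by
  have h_inj : Set.InjOn momentMap (Set.Ioi (0 : ℝ) ×ˢ Set.Ioi (0 : ℝ)) := by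
    rintro ⟨u, v⟩ ⟨hu, hv⟩ ⟨u', v'⟩ ⟨hu', hv'⟩ h
    simp only [momentMap, Prod.mk.injEq] at h
    obtain ⟨h1, h2⟩ := h
    have hvv : v = v' := strictAntiOn_sqCV.injOn hv hv' <| by
      rw [sqCV_eq hu.ne' hv, sqCV_eq hu'.ne' hv', h1, h2]
    subst hvv
    rw [g1_eq hv.ne', g1_eq hv.ne'] at h1
    have huu := mul_right_cancel₀ (add_pos hv (millsRatio_pos v)).ne' h1
    rw [div_left_inj' hv.ne'] at huu
    rw [huu]
  refine ⟨h_inj, ?_⟩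
  rintro M ⟨p, hp, rfl⟩
  exact ⟨p, ⟨hp, rfl⟩, fun q hq => h_inj hq.1 hp hq.2⟩
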